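/- Let M > 1 and n ≥ 1 a natural number, and set v = 0. Define αₛ = 2/(1 + √(1 − 2M + 2M²)) and βₛ = 2/(1 + 2M − √(2M² − 2M + 1)). Then αₛ ∈ [1/M, 1), βₛ ∈ (αₛ/M, (M+1)/(2M)), αₛ satisfies the cubic equation (M−1)Mn·αₛ³ − (M+1)(M−2)n·αₛ² − 4n·αₛ + 2n = 0, and βₛ satisfies q(βₛ) = 0, where q is the quadratic in β with parameters (M, n, v=0, α=αₛ) given by q(β) = Mn((M−1)²n)((M−1)αₛ + (M+1))β² + 2M[−2(M−1)Mn²·αₛ² − (M+1)n²(3−M)αₛ + n(n − (M−4)Mn)]β + [2M(M²−1)n²·αₛ² + 2(2+M+2M²−M³)n²·αₛ − 2(M+1)²n²]. -/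

import Mathlib

/-- The cubic `h(α)` from the two-step stochastic stepsize schedule analysis. -/
noncomputable def hcub (M n v α : ℝ) : ℝ :=
  (M - 1) * M * n * α ^ 3 - (M + 1) * (M - 2) * n * α ^ 2
    - (4 * n + (M - 1) * (n - 1) * v) * α + 2 * n

/-- The quadratic `q(β)` (in `β`, with parameters `M, n, v, α`) from the
two-step stochastic stepsize schedule analysis. -/
noncomputable def qquad (M n v α β : ℝ) : ℝ :=
  M * n * ((M - 1) ^ 2 * n + (M + 1) ^ 2 * (n - 1) * v) * ((M - 1) * α + (M + 1)) * β ^ 2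
  + 2 * M * (2 * (M - 1) * M * n * ((n - 1) * v - n) * α ^ 2
      + (M + 1) * ((n - 1) * v - n) * ((3 - M) * n + (M - 1) * (n - 1) * v) * α
      + n * (n - (M - 4) * M * n - (M + 1) * (M + 3) * (n - 1) * v)) * β
  + (-2 * M * (M ^ 2 - 1) * n * ((n - 1) * v - n) * α ^ 2
      + (2 * (2 + M + 2 * M ^ 2 - M ^ 3) * n ^ 2 + (M - 3) * (M + 1) ^ 2 * (n - 1) * n * v
          - (M - 1) * (M + 1) ^ 2 * (n - 1) ^ 2 * v ^ 2) * α
      + 2 * (M + 1) ^ 2 * n * ((n - 1) * v - n))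

/-!
With `s = √(2M² - 2M + 1)` the silver stepsizes are `α = 2 / (1 + s)` and `β = 2 / (1 + 2M - s)`.
The relation `s² = 2M² - 2M + 1` says exactly that `α` solves `M(M - 1)α² + 2α = 2`, while
`1/α + 1/β = M + 1` holds identically. At `v = 0` the cubic is `n (α - 1)` times this quadratic,
and `q` vanishes modulo the two relations once `β` is eliminated. The interval bounds reduce to
`1 < s < 2M - 1` and `(M + 1) s < 2M² - M + 1`; squared, the two sides of the latter differ by
`2M(M - 1)³`.
-/

section StepsizeRelations

variable {M α β : ℝ}

theorem hcub_eq_zero_of_quadratic (n : ℝ) (hα : M * (M - 1) * α ^ 2 + 2 * α = 2) :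
    hcub M n 0 α = 0 := by
  unfold hcub
  linear_combination n * (α - 1) * hα

theorem qquad_eq_zero_of_quadratic (n : ℝ) (hα : M * (M - 1) * α ^ 2 + 2 * α = 2)
    (hαβ : α + β = (M + 1) * α * β) : qquad M n 0 α β = 0 := by
  have hd : (M + 1) * α - 1 ≠ 0 := by
    intro h
    have hα0 : α = 0 := by linear_combination hαβ + β * h
    rw [hα0] at hα
    norm_num at hα
  have hreduce : qquad M n 0 α β = n ^ 2 * (M - 1) *
      (M * (M - 1) * ((M - 1) * α + (M + 1)) * β ^ 2 + 2 * M * ((M - 1) * α - (M - 3)) * β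
        - 2 * (M + 1 + M * (M - 1) * α)) := by
    unfold qquad
    linear_combination n ^ 2 * (2 * (M + 1) - 4 * M * β) * hα
  -- multiplying by `((M + 1)α - 1)²` turns `β` into `α` via `((M + 1)α - 1) β = α`
  have hcleared : ((M + 1) * α - 1) ^ 2 *
      (M * (M - 1) * ((M - 1) * α + (M + 1)) * β ^ 2 + 2 * M * ((M - 1) * α - (M - 3)) * β
        - 2 * (M + 1 + M * (M - 1) * α)) = 0 := by
    linear_combination (1 + M - (1 + M + 2 * M ^ 2) * α) * hα
      - (M * (M - 1) * ((M - 1) * α + (M + 1)) * (α + ((M + 1) * α - 1) * β)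
        + 2 * M * ((M - 1) * α - (M - 3)) * ((M + 1) * α - 1)) * hαβ
  rw [hreduce, (mul_eq_zero.mp hcleared).resolve_left (pow_ne_zero 2 hd), mul_zero]

end StepsizeRelations

section SilverStepsizes

variable {M s : ℝ}

theorem silver_alpha_quadratic (hs : s ^ 2 = 2 * M ^ 2 - 2 * M + 1) (h1 : 1 + s ≠ 0) :
    M * (M - 1) * (2 / (1 + s)) ^ 2 + 2 * (2 / (1 + s)) = 2 := by
  field_simp
  linear_combination -hs

theorem silver_add_eq_mul (h1 : 1 + s ≠ 0) (h2 : 1 + 2 * M - s ≠ 0) :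
    2 / (1 + s) + 2 / (1 + 2 * M - s) = (M + 1) * (2 / (1 + s)) * (2 / (1 + 2 * M - s)) := by
  field_simp
  ring

theorem silver_root_mem_Ioo (hM : 1 < M) (hs : s ^ 2 = 2 * M ^ 2 - 2 * M + 1) (hs0 : 0 ≤ s) :
    s ∈ Set.Ioo 1 (2 * M - 1) :=
  ⟨by nlinarith, by nlinarith⟩

theorem silver_alpha_mem_Ico (h1 : 1 < s) (h2 : s < 2 * M - 1) :
    2 / (1 + s) ∈ Set.Ico (1 / M) 1 := by
  constructor
  · rw [div_le_div_iff₀ (by linarith) (by linarith)]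
    linarith
  · rw [div_lt_one (by linarith)]
    linarith

theorem silver_beta_mem_Ioo (hs : s ^ 2 = 2 * M ^ 2 - 2 * M + 1) (h1 : 1 < s) (h2 : s < 2 * M - 1) :
    2 / (1 + 2 * M - s) ∈ Set.Ioo (2 / (1 + s) / M) ((M + 1) / (2 * M)) := by
  have hM : 0 < M - 1 := by linarith
  constructor
  · rw [div_div, div_lt_div_iff₀ (by nlinarith) (by linarith)]
    nlinarith
  · rw [div_lt_div_iff₀ (by linarith) (by linarith)]
    have hsq : ((M + 1) * s) ^ 2 < (2 * M ^ 2 - M + 1) ^ 2 := by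
      nlinarith [pow_pos hM 3]
    nlinarith [lt_of_pow_lt_pow_left₀ 2 (by nlinarith) hsq]

end SilverStepsizes

theorem stmt_2 (M : ℝ) (n : ℕ) (hM : 1 < M) :
    let αs : ℝ := 2 / (1 + Real.sqrt (1 - 2 * M + 2 * M ^ 2))
    let βs : ℝ := 2 / (1 + 2 * M - Real.sqrt (2 * M ^ 2 - 2 * M + 1))
    αs ∈ Set.Ico (1 / M) 1 ∧
    βs ∈ Set.Ioo (αs / M) ((M + 1) / (2 * M)) ∧
    hcub M (n : ℝ) 0 αs = 0 ∧
    qquad M (n : ℝ) 0 αs βs = 0 := by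
  simp only [show 1 - 2 * M + 2 * M ^ 2 = 2 * M ^ 2 - 2 * M + 1 by ring]
  set s := Real.sqrt (2 * M ^ 2 - 2 * M + 1)
  have hs : s ^ 2 = 2 * M ^ 2 - 2 * M + 1 := Real.sq_sqrt (by nlinarith)
  obtain ⟨h1, h2⟩ := silver_root_mem_Ioo hM hs (Real.sqrt_nonneg _)
  have hα := silver_alpha_quadratic hs (by linarith)
  exact ⟨silver_alpha_mem_Ico h1 h2, silver_beta_mem_Ioo hs h1 h2, hcub_eq_zero_of_quadratic _ hα,
    qquad_eq_zero_of_quadratic _ hα (silver_add_eq_mul (by linarith) (by linarith))⟩
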